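/- arXiv:1709.00769 — 3 statements merged into one kernel-verified Lean document; each statement's English description precedes it below -/
import Mathlib

section
/- Let R = F_p[Z/pZ] ≅ F_p[τ]/(τ^p) and let φ : M → N be an R-linear map between finite rank free R-modules. Let φ̄ : M/τM → N/τN be the induced F_p-linear map. Then dim_{F_p} im(φ) ≥ p · dim_{F_p} im(φ̄) and dim_{F_p} ker(φ) ≤ p · dim_{F_p} ker(φ̄). -/
/-!
If the images in `N/τN` of `w₁, …, w_r ∈ im φ` are linearly independent, then so are the `p r`
vectors `τ ^ j • wᵢ` (`j < p`): in a relation, multiplying by `τ ^ (p - 1 - j)` for the least `j`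
that occurs leaves `τ ^ (p - 1) • ∑ cᵢ wᵢ = 0`, and on a free `F_p[τ]/(τ^p)`-module the kernel
of `τ ^ (p - 1)` is `τN`. This is the image inequality. The kernel inequality follows by
rank–nullity, since `dim M = p · rk M` while `dim M/τM ≥ rk M`.
-/

set_option synthInstance.maxHeartbeats 1000000
set_option maxHeartbeats 1000000
open Polynomial Module

/-- `R = F_p[τ]/(τ^p)`, the group algebra of `Z/pZ` over `F_p`. -/
abbrev TruncPolyRing (p : ℕ) : Type :=
  Polynomial (ZMod p) ⧸ Ideal.span {(X : Polynomial (ZMod p)) ^ p}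

/-- The element `τ` of `F_p[τ]/(τ^p)`. -/
noncomputable def tauElem (p : ℕ) : TruncPolyRing p :=
  Ideal.Quotient.mk (Ideal.span {(X : Polynomial (ZMod p)) ^ p}) X

section NilpotentFiltration

variable {F A N : Type*} [Field F] [CommRing A] [Algebra F A] [AddCommGroup N] [Module A N]
  [Module F N] [IsScalarTower F A N] {t : A} {p : ℕ}

lemma mem_span_smul_top_of_sum_pow_smul_eq_zero (ht : t ^ p = 0)
    (hann : ∀ z : N, t ^ (p - 1) • z = 0 → z ∈ Ideal.span {t} • (⊤ : Submodule A N))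
    {v : Fin p → N} (hv : ∑ j : Fin p, t ^ (j : ℕ) • v j = 0) (j : Fin p)
    (hlow : ∀ k < j, v k = 0) :
    v j ∈ Ideal.span {t} • (⊤ : Submodule A N) := by
  refine hann _ ?_
  have hsum : t ^ (p - 1 - j) • ∑ k : Fin p, t ^ (k : ℕ) • v k = t ^ (p - 1) • v j := by
    simp_rw [Finset.smul_sum, smul_smul, ← pow_add]
    rw [Finset.sum_eq_single j]
    · rw [Nat.sub_add_cancel (by omega)]
    · intro k _ hkj
      rcases lt_or_gt_of_ne hkj with hlt | hgt
      · rw [hlow k hlt, smul_zero]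
      · rw [pow_eq_zero_of_le (by omega) ht, zero_smul]
    · simp
  rw [← hsum, hv, smul_zero]

lemma linearIndependent_pow_smul {ι : Type*} [Fintype ι] (ht : t ^ p = 0)
    (hann : ∀ z : N, t ^ (p - 1) • z = 0 → z ∈ Ideal.span {t} • (⊤ : Submodule A N))
    {w : ι → N}
    (hw : LinearIndependent F ((Ideal.span {t} • (⊤ : Submodule A N)).mkQ ∘ w)) :
    LinearIndependent F (fun ji : Fin p × ι => t ^ (ji.1 : ℕ) • w ji.2) := by
  rw [Fintype.linearIndependent_iff]
  intro g hg
  set v : Fin p → N := fun j => ∑ i, g (j, i) • w i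
  have hv : ∑ j : Fin p, t ^ (j : ℕ) • v j = 0 := by
    rw [← hg, Fintype.sum_prod_type]
    simp_rw [v, Finset.smul_sum, smul_comm (t ^ _)]
  suffices ∀ j i, g (j, i) = 0 from fun ji => this ji.1 ji.2
  intro j
  induction j using Fin.strong_induction_on with
  | h j IH =>
    have hlow : ∀ k < j, v k = 0 := fun k hk => by simp [v, IH k hk]
    have hvj := mem_span_smul_top_of_sum_pow_smul_eq_zero ht hann hv j hlow
    rw [← Submodule.Quotient.mk_eq_zero] at hvj
    refine Fintype.linearIndependent_iff.mp hw (fun i => g (j, i)) ?_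
    simpa [v, ← Submodule.mkQ_apply] using hvj

lemma mul_finrank_map_mkQ_le [Module.Finite F N] (ht : t ^ p = 0)
    (hann : ∀ z : N, t ^ (p - 1) • z = 0 → z ∈ Ideal.span {t} • (⊤ : Submodule A N))
    (W : Submodule A N) :
    p * finrank F ((W.map (Ideal.span {t} • (⊤ : Submodule A N)).mkQ).restrictScalars F) ≤
      finrank F (W.restrictScalars F) := by
  set Wbar := (W.map (Ideal.span {t} • (⊤ : Submodule A N)).mkQ).restrictScalars F
  let b := Module.finBasis F Wbar
  have hlift : ∀ i, ∃ w ∈ W, (Ideal.span {t} • (⊤ : Submodule A N)).mkQ w = b i :=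
    fun i => (b i).2
  choose w hwW hmk using hlift
  have hcomp : (Ideal.span {t} • (⊤ : Submodule A N)).mkQ ∘ w = Wbar.subtype ∘ b := funext hmk
  have hind := linearIndependent_pow_smul ht hann
    (hcomp ▸ b.linearIndependent.map' Wbar.subtype (Submodule.ker_subtype _))
  have hmem : ∀ ji : Fin p × Fin (finrank F Wbar), t ^ (ji.1 : ℕ) • w ji.2 ∈ W :=
    fun ji => W.smul_mem _ (hwW ji.2)
  simpa using (LinearIndependent.of_comp (W.restrictScalars F).subtype
    (v := fun ji => (⟨_, hmem ji⟩ : W.restrictScalars F)) hind).fintype_card_le_finrank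

end NilpotentFiltration

section QuotientSMulTop

variable {A : Type*} [CommRing A]

lemma mem_span_smul_top_of_forall_dvd {ι : Type*} {t : A} {z : ι → A} (hz : ∀ i, t ∣ z i) :
    z ∈ Ideal.span {t} • (⊤ : Submodule A (ι → A)) := by
  choose c hc using hz
  rw [show z = t • c from funext hc]
  exact Submodule.smul_mem_smul (Ideal.mem_span_singleton_self t) trivial

lemma apply_mem_of_mem_smul_top {ι : Type*} {I : Ideal A} {z : ι → A}
    (hz : z ∈ I • (⊤ : Submodule A (ι → A))) (i : ι) : z i ∈ I := by
  refine (Submodule.smul_le.mpr ?_ : I • (⊤ : Submodule A (ι → A)) ≤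
    Submodule.comap (LinearMap.proj (R := A) (φ := fun _ : ι => A) i) I) hz
  intro r hr x _
  exact I.mul_mem_right (x i) hr

variable {F : Type*} [Field F] [Algebra F A]

lemma linearIndependent_mk_single {ι : Type*} [Fintype ι] [DecidableEq ι] {I : Ideal A}
    (hI : I ≠ ⊤) :
    LinearIndependent F
      (fun i : ι => (I • (⊤ : Submodule A (ι → A))).mkQ (Pi.single i 1)) := by
  rw [Fintype.linearIndependent_iff]
  intro g hg i
  by_contra hgi
  have hmem : ∑ k, g k • (Pi.single k 1 : ι → A) ∈ I • (⊤ : Submodule A (ι → A)) := by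
    rw [← Submodule.Quotient.mk_eq_zero, ← Submodule.mkQ_apply, map_sum, ← hg]
    simp
  have hi := apply_mem_of_mem_smul_top hmem i
  simp only [Algebra.smul_def, Finset.sum_apply, Pi.mul_apply, Pi.algebraMap_apply,
    Pi.single_apply, mul_ite, mul_one, mul_zero, Finset.sum_ite_eq, Finset.mem_univ,
    ↓reduceIte] at hi
  exact hI (I.eq_top_of_isUnit_mem hi ((IsUnit.mk0 _ hgi).map _))

lemma card_le_finrank_quotient_smul_top {ι : Type*} [Fintype ι] [Module.Finite F A]
    {I : Ideal A} (hI : I ≠ ⊤) :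
    Fintype.card ι ≤ finrank F ((ι → A) ⧸ I • (⊤ : Submodule A (ι → A))) := by
  classical
  have : Module.Finite F ((ι → A) ⧸ I • (⊤ : Submodule A (ι → A))) :=
    Module.Finite.trans A _
  exact (linearIndependent_mk_single hI).fintype_card_le_finrank

end QuotientSMulTop

namespace TruncPolyRing

variable (p : ℕ) [Fact p.Prime]

instance : Module.Finite (ZMod p) (TruncPolyRing p) :=
  (AdjoinRoot.powerBasis' (monic_X.pow p)).finite

lemma finrank_eq : finrank (ZMod p) (TruncPolyRing p) = p :=
  (AdjoinRoot.powerBasis' (monic_X.pow p)).finrank.trans (by simp [AdjoinRoot.powerBasis'])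

lemma tauElem_pow : tauElem p ^ p = 0 := by
  rw [tauElem, ← map_pow, Ideal.Quotient.eq_zero_iff_mem]
  exact Ideal.mem_span_singleton_self _

lemma tauElem_dvd_of_pow_mul_eq_zero {a : TruncPolyRing p} (h : tauElem p ^ (p - 1) * a = 0) :
    tauElem p ∣ a := by
  obtain ⟨f, rfl⟩ := Ideal.Quotient.mk_surjective a
  have hXp : (X : (ZMod p)[X]) ^ p = X ^ (p - 1) * X := by
    rw [← pow_succ, Nat.sub_add_cancel (Fact.out : p.Prime).one_le]
  rw [tauElem, ← map_pow, ← map_mul, Ideal.Quotient.eq_zero_iff_mem,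
    Ideal.mem_span_singleton, hXp, mul_dvd_mul_iff_left (pow_ne_zero _ X_ne_zero)] at h
  exact map_dvd _ h

lemma span_tauElem_ne_top : Ideal.span {tauElem p} ≠ ⊤ := by
  have : Nontrivial (TruncPolyRing p) :=
    Module.nontrivial_of_finrank_pos (R := ZMod p)
      ((finrank_eq p).symm ▸ (Fact.out : p.Prime).pos)
  rw [Ne, Ideal.span_singleton_eq_top]
  exact IsNilpotent.not_isUnit ⟨p, tauElem_pow p⟩

end TruncPolyRing

/-- The modular lemma: for `R = F_p[Z/pZ] ≅ F_p[τ]/(τ^p)` and an `R`-linear map `φ` between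
finite rank free `R`-modules, with `φ̄` the induced `F_p`-linear map `M/τM → N/τN`, one has
`dim_{F_p} im(φ) ≥ p · dim_{F_p} im(φ̄)` and `dim_{F_p} ker(φ) ≤ p · dim_{F_p} ker(φ̄)`. -/
theorem modular_lemma (p : ℕ) [Fact p.Prime] (m n : ℕ)
    (φ : (Fin m → TruncPolyRing p) →ₗ[TruncPolyRing p] (Fin n → TruncPolyRing p))
    (φbar :
      ((Fin m → TruncPolyRing p) ⧸
        (Ideal.span {tauElem p} • (⊤ : Submodule (TruncPolyRing p) (Fin m → TruncPolyRing p))))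
      →ₗ[TruncPolyRing p]
      ((Fin n → TruncPolyRing p) ⧸
        (Ideal.span {tauElem p} • (⊤ : Submodule (TruncPolyRing p) (Fin n → TruncPolyRing p)))))
    (hcompat : ∀ x, φbar (Submodule.Quotient.mk x) = Submodule.Quotient.mk (φ x)) :
    p * finrank (ZMod p) ↥((LinearMap.range φbar).restrictScalars (ZMod p)) ≤
      finrank (ZMod p) ↥((LinearMap.range φ).restrictScalars (ZMod p)) ∧
    finrank (ZMod p) ↥((LinearMap.ker φ).restrictScalars (ZMod p)) ≤
      p * finrank (ZMod p) ↥((LinearMap.ker φbar).restrictScalars (ZMod p)) := by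
  have hrange : LinearMap.range φbar = (LinearMap.range φ).map (Submodule.mkQ _) := by
    rw [← LinearMap.range_comp_of_range_eq_top φbar (Submodule.range_mkQ _), ← LinearMap.range_comp]
    exact congrArg LinearMap.range (LinearMap.ext hcompat)
  have himage : p * finrank (ZMod p) ↥((LinearMap.range φbar).restrictScalars (ZMod p)) ≤
      finrank (ZMod p) ↥((LinearMap.range φ).restrictScalars (ZMod p)) :=
    hrange ▸ mul_finrank_map_mkQ_le (TruncPolyRing.tauElem_pow p)
      (fun z hz => mem_span_smul_top_of_forall_dvd
        fun i => TruncPolyRing.tauElem_dvd_of_pow_mul_eq_zero p (congrFun hz i)) _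
  refine ⟨himage, ?_⟩
  have hφ : finrank (ZMod p) ↥((LinearMap.range φ).restrictScalars (ZMod p)) +
      finrank (ZMod p) ↥((LinearMap.ker φ).restrictScalars (ZMod p)) = m * p :=
    (LinearMap.finrank_range_add_finrank_ker (φ.restrictScalars (ZMod p))).trans
      (by simp [Module.finrank_pi_fintype, TruncPolyRing.finrank_eq])
  have hφbar : m ≤ finrank (ZMod p) ↥((LinearMap.range φbar).restrictScalars (ZMod p)) +
      finrank (ZMod p) ↥((LinearMap.ker φbar).restrictScalars (ZMod p)) :=
    calc m = Fintype.card (Fin m) := (Fintype.card_fin m).symm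
      _ ≤ _ := card_le_finrank_quotient_smul_top (TruncPolyRing.span_tauElem_ne_top p)
      _ = _ := (LinearMap.finrank_range_add_finrank_ker (φbar.restrictScalars (ZMod p))).symm
  have hpφbar := Nat.mul_le_mul_left p hφbar
  rw [mul_add] at hpφbar
  linarith [mul_comm m p]
end

section
/- Let μ_i, μ be finite Borel measures on ℝ supported in [0, C], with μ_i → μ weakly, and suppose there is δ > 0 such that det(μ_i) := exp(∫_{(0,∞)} ln t dμ_i(t)) ≥ δ for all i. Then lim_{i→∞} μ_i({0}) = μ({0}). -/
/-!
The closed-set half of the portmanteau theorem gives `limsup μᵢ{0} ≤ μ{0}`. For the other half,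
test against a continuous function equal to `1` at `0` and vanishing outside `(-ε, ε)`: this gives
`μ{0} ≤ liminf μᵢ(-ε, ε)`, and `μᵢ(-ε, ε) = μᵢ{0} + μᵢ(0, ε)`. The determinant bound makes
`μᵢ(0, ε)` small uniformly in `i`: splitting `∫ log dμᵢ` at `ε` gives
`log δ ≤ μᵢ(0, ε) log ε + log⁺ C · supᵢ μᵢ(ℝ)`, so `μᵢ(0, ε) = O(1 / |log ε|)`.
-/

open Filter MeasureTheory Metric Set Topology Real
open scoped ENNReal NNReal

section Thickening

variable {Ω : Type*} [MeasurableSpace Ω] [PseudoEMetricSpace Ω] [OpensMeasurableSpace Ω]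

theorem lintegral_thickenedIndicator_le_measure_thickening (μ : Measure Ω) {δ : ℝ} (hδ : 0 < δ)
    (E : Set Ω) : ∫⁻ x, (thickenedIndicator hδ E x : ℝ≥0∞) ∂μ ≤ μ (thickening δ E) := by
  rw [← lintegral_indicator_one isOpen_thickening.measurableSet]
  refine lintegral_mono fun x => ?_
  by_cases hx : x ∈ thickening δ E
  · simpa [indicator_of_mem hx] using thickenedIndicator_le_one hδ E x
  · simp [indicator_of_notMem hx, thickenedIndicator_zero hδ E hx]

variable {ι : Type*} {L : Filter ι} {μs : ι → FiniteMeasure Ω} {μ : FiniteMeasure Ω} {F : Set Ω}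

theorem FiniteMeasure.le_liminf_measure_of_tendsto_of_forall_measure_thickening_diff_le
    (hlim : Tendsto μs L (𝓝 μ)) (hF : MeasurableSet F)
    (hcollar : ∀ η : ℝ≥0, 0 < η → ∃ δ > 0, ∀ i, (μs i : Measure Ω) (thickening δ F \ F) ≤ η) :
    (μ : Measure Ω) F ≤ L.liminf fun i ↦ (μs i : Measure Ω) F := by
  rcases L.eq_or_neBot with rfl | _
  · simp
  refine ENNReal.le_of_forall_pos_le_add fun η hη _ => ?_
  obtain ⟨δ, hδ, hsmall⟩ := hcollar η hη
  have hf := FiniteMeasure.tendsto_iff_forall_lintegral_tendsto.mp hlim (thickenedIndicator hδ F)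
  have hbound : ∀ i, ∫⁻ x, (thickenedIndicator hδ F x : ℝ≥0∞) ∂(μs i : Measure Ω)
      ≤ (μs i : Measure Ω) F + η := fun i =>
    calc _ ≤ (μs i : Measure Ω) (thickening δ F) :=
          lintegral_thickenedIndicator_le_measure_thickening _ hδ F
      _ ≤ (μs i : Measure Ω) (F ∪ thickening δ F \ F) :=
          measure_mono (sdiff_subset_iff.mp subset_rfl)
      _ ≤ (μs i : Measure Ω) F + η := (measure_union_le _ _).trans (by gcongr; exact hsmall i)
  calc (μ : Measure Ω) F ≤ ∫⁻ x, (thickenedIndicator hδ F x : ℝ≥0∞) ∂μ :=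
        measure_le_lintegral_thickenedIndicator _ hF hδ
    _ = L.liminf fun i ↦ ∫⁻ x, (thickenedIndicator hδ F x : ℝ≥0∞) ∂(μs i : Measure Ω) :=
        hf.liminf_eq.symm
    _ ≤ L.liminf fun i ↦ (μs i : Measure Ω) F + η := liminf_le_liminf (.of_forall hbound)
    _ = (L.liminf fun i ↦ (μs i : Measure Ω) F) + η :=
        liminf_add_const L _ _ (by isBoundedDefault) (by isBoundedDefault)

theorem FiniteMeasure.tendsto_measure_of_tendsto_of_forall_measure_thickening_diff_le
    (hlim : Tendsto μs L (𝓝 μ)) (hF : IsClosed F)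
    (hcollar : ∀ η : ℝ≥0, 0 < η → ∃ δ > 0, ∀ i, (μs i : Measure Ω) (thickening δ F \ F) ≤ η) :
    Tendsto (fun i ↦ (μs i : Measure Ω) F) L (𝓝 ((μ : Measure Ω) F)) :=
  tendsto_of_le_liminf_of_limsup_le
    (le_liminf_measure_of_tendsto_of_forall_measure_thickening_diff_le hlim hF.measurableSet
      hcollar)
    (FiniteMeasure.limsup_measure_closed_le_of_tendsto hlim hF)

end Thickening

theorem FiniteMeasure.tendsto_measure_zero_of_forall_measure_Ioo_le {ι : Type*} {L : Filter ι}
    {μs : ι → FiniteMeasure ℝ} {μ : FiniteMeasure ℝ} (hlim : Tendsto μs L (𝓝 μ))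
    (hneg : ∀ i, (μs i : Measure ℝ) (Iio 0) = 0)
    (hsmall : ∀ η : ℝ≥0, 0 < η → ∃ ε > 0, ∀ i, (μs i : Measure ℝ) (Ioo 0 ε) ≤ η) :
    Tendsto (fun i ↦ (μs i : Measure ℝ) {0}) L (𝓝 ((μ : Measure ℝ) {0})) := by
  refine tendsto_measure_of_tendsto_of_forall_measure_thickening_diff_le hlim isClosed_singleton
    fun η hη => ?_
  obtain ⟨ε, hε, hsmallε⟩ := hsmall η hη
  refine ⟨ε, hε, fun i => ?_⟩
  have hcollar : thickening ε {(0 : ℝ)} \ {0} ⊆ Iio 0 ∪ Ioo 0 ε := by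
    rintro x ⟨hx, hx0⟩
    rw [thickening_singleton, Real.ball_eq_Ioo, zero_sub, zero_add] at hx
    rcases lt_or_gt_of_ne hx0 with hlt | hgt
    · exact Or.inl hlt
    · exact Or.inr ⟨hgt, hx.2⟩
  calc (μs i : Measure ℝ) (thickening ε {0} \ {0}) ≤ (μs i : Measure ℝ) (Iio 0 ∪ Ioo 0 ε) :=
        measure_mono hcollar
    _ ≤ η := (measure_union_le _ _).trans (by rw [hneg, zero_add]; exact hsmallε i)

theorem setIntegral_Ioi_log_le {ν : Measure ℝ} [IsFiniteMeasure ν] {C ε : ℝ}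
    (hC : ∀ᵐ t ∂ν, t ≤ C) (hε : 0 < ε) (hlog : IntegrableOn log (Ioi 0) ν) :
    ∫ t in Ioi 0, log t ∂ν ≤ ν.real (Ioo 0 ε) * log ε + log⁺ C * ν.real univ := by
  have hnear : ∫ t in Ioo 0 ε, log t ∂ν ≤ ν.real (Ioo 0 ε) * log ε := by
    rw [← smul_eq_mul, ← setIntegral_const]
    exact setIntegral_mono_on (hlog.mono_set Ioo_subset_Ioi_self) integrableOn_const
      measurableSet_Ioo fun t ht => log_le_log ht.1 ht.2.le
  have hfar : ∫ t in Ici ε, log t ∂ν ≤ log⁺ C * ν.real univ := by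
    calc ∫ t in Ici ε, log t ∂ν ≤ ∫ _ in Ici ε, log⁺ C ∂ν := by
          refine setIntegral_mono_ae_restrict (hlog.mono_set fun t ht => hε.trans_le ht)
            integrableOn_const ((ae_restrict_iff' measurableSet_Ici).mpr ?_)
          filter_upwards [hC] with t htC ht
          exact (log_le_log (hε.trans_le ht) htC).trans (le_max_right _ _)
      _ = log⁺ C * ν.real (Ici ε) := by rw [setIntegral_const, smul_eq_mul, mul_comm]
      _ ≤ log⁺ C * ν.real univ :=
          mul_le_mul_of_nonneg_left (measureReal_mono (subset_univ _)) posLog_nonneg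
  rw [← Ioo_union_Ici_eq_Ioi hε, setIntegral_union
    ((Iio_disjoint_Ici le_rfl).mono_left Ioo_subset_Iio_self) measurableSet_Ici
    (hlog.mono_set Ioo_subset_Ioi_self) (hlog.mono_set fun t ht => hε.trans_le ht)]
  exact add_le_add hnear hfar

theorem exists_forall_measure_Ioo_zero_le_of_le_setIntegral_log {ι : Type*}
    {μs : ι → Measure ℝ} [∀ i, IsFiniteMeasure (μs i)] {C K a : ℝ}
    (hC : ∀ i, ∀ᵐ t ∂μs i, t ≤ C) (hK : ∀ i, (μs i).real univ ≤ K)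
    (hlog : ∀ i, IntegrableOn log (Ioi 0) (μs i)) (ha : ∀ i, a ≤ ∫ t in Ioi 0, log t ∂μs i)
    {η : ℝ≥0} (hη : 0 < η) : ∃ ε > 0, ∀ i, μs i (Ioo 0 ε) ≤ η := by
  -- `μᵢ(0, ε) · (-log ε) ≤ B` by `setIntegral_Ioi_log_le`, so `-log ε = (|B| + 1) / η` suffices.
  set B := log⁺ C * K - a
  set s := (|B| + 1) / η
  have hs : 0 < s := by positivity
  refine ⟨exp (-s), exp_pos _, fun i => ?_⟩
  have hbound := setIntegral_Ioi_log_le (hC i) (exp_pos (-s)) (hlog i)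
  rw [log_exp] at hbound
  have hmass : log⁺ C * (μs i).real univ ≤ log⁺ C * K := by gcongr; exacts [posLog_nonneg, hK i]
  have hmul : (μs i).real (Ioo 0 (exp (-s))) * s ≤ η * s := by
    calc _ ≤ B := by linarith [ha i]
      _ ≤ |B| + 1 := (le_abs_self B).trans (le_add_of_nonneg_right zero_le_one)
      _ = η * s := (mul_div_cancel₀ _ (by positivity)).symm
  rw [← ENNReal.ofReal_coe_nnreal, ← ofReal_measureReal]
  exact ENNReal.ofReal_le_ofReal (le_of_mul_le_mul_right hmul hs)

theorem atom_at_zero_convergence_of_det_bound_general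
    (μs : ℕ → Measure ℝ) (μ : Measure ℝ)
    [∀ i, IsFiniteMeasure (μs i)] [IsFiniteMeasure μ]
    (C : ℝ)
    (hsupp : ∀ i, μs i (Set.Icc 0 C)ᶜ = 0)
    (hweak : ∀ f : BoundedContinuousFunction ℝ ℂ,
      Tendsto (fun i => ∫ x, f x ∂(μs i)) atTop (nhds (∫ x, f x ∂μ)))
    (δ : ℝ) (hδ : 0 < δ)
    (hint : ∀ i, IntegrableOn Real.log (Set.Ioi 0) (μs i))
    (hdet : ∀ i, δ ≤ Real.exp (∫ t in Set.Ioi (0 : ℝ), Real.log t ∂(μs i))) :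
    Tendsto (fun i => (μs i {0}).toReal) atTop (nhds (μ {0}).toReal) := by
  let νs : ℕ → FiniteMeasure ℝ := fun i => ⟨μs i, inferInstance⟩
  have hlim : Tendsto νs atTop (𝓝 ⟨μ, inferInstance⟩) :=
    (FiniteMeasure.tendsto_iff_forall_integral_rclike_tendsto ℂ).mpr hweak
  obtain ⟨K, hK⟩ := hlim.mass.bddAbove_range
  have hle : ∀ i, ∀ᵐ t ∂μs i, t ≤ C := fun i =>
    (measure_eq_zero_iff_ae_notMem.mp (hsupp i)).mono fun t ht => (not_not.mp ht).2
  have hneg : ∀ i, μs i (Iio 0) = 0 := fun i =>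
    measure_mono_null (fun t (ht : t < 0) (hmem : t ∈ Icc 0 C) => not_le.mpr ht hmem.1) (hsupp i)
  have hsmall := fun (η : ℝ≥0) (hη : 0 < η) =>
    exists_forall_measure_Ioo_zero_le_of_le_setIntegral_log hle
      (fun i => NNReal.coe_le_coe.mpr (hK (mem_range_self i))) hint
      (fun i => (log_le_iff_le_exp hδ).mpr (hdet i)) hη
  exact (ENNReal.tendsto_toReal (measure_ne_top μ {0})).comp
    (FiniteMeasure.tendsto_measure_zero_of_forall_measure_Ioo_le hlim hneg hsmall)

/-- If finite measures `μ_i` on `ℝ`, supported in `[0, C]`, converge weakly to `μ` and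
their Fuglede–Kadison determinants `det(μ_i) = exp ∫_{(0,∞)} ln t dμ_i` are bounded below
by some `δ > 0`, then `μ_i({0}) → μ({0})`. -/
theorem atom_at_zero_convergence_of_det_bound
    (μs : ℕ → Measure ℝ) (μ : Measure ℝ)
    [∀ i, IsFiniteMeasure (μs i)] [IsFiniteMeasure μ]
    (C : ℝ)
    (hsupp : ∀ i, μs i (Set.Icc 0 C)ᶜ = 0) (hμsupp : μ (Set.Icc 0 C)ᶜ = 0)
    (hweak : ∀ f : BoundedContinuousFunction ℝ ℂ,
      Tendsto (fun i => ∫ x, f x ∂(μs i)) atTop (nhds (∫ x, f x ∂μ)))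
    (δ : ℝ) (hδ : 0 < δ)
    (hint : ∀ i, IntegrableOn Real.log (Set.Ioi 0) (μs i))
    (hdet : ∀ i, δ ≤ Real.exp (∫ t in Set.Ioi (0 : ℝ), Real.log t ∂(μs i))) :
    Tendsto (fun i => (μs i {0}).toReal) atTop (nhds (μ {0}).toReal) :=
  atom_at_zero_convergence_of_det_bound_general μs μ C hsupp hweak δ hδ hint hdet
end

section
/- Let G be a group with a finite classifying space BG admitting a finite index normal tower (Gᵢ) with every Gᵢ isomorphic to G. Assuming Lück's approximation theorem (lim b_q(Gᵢ; Q)/[G:Gᵢ] = b_q^{(2)}(G)), all L²-Betti numbers of G vanish: b_q^{(2)}(G) = 0 for all q. -/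
open Filter

/-- If a nontrivial group `G` (with finite classifying space, so that its Betti numbers
`b H q` are defined for subgroups and depend only on the isomorphism type) admits a finite
index normal tower `(Gᵢ)` with each `Gᵢ ≅ G`, then, assuming Lück's approximation theorem
`b_q(Gᵢ; ℚ)/[G:Gᵢ] → b_q^{(2)}(G)`, all `L²`-Betti numbers of `G` vanish. -/
theorem l2_betti_vanish_of_selfsimilar_tower
    (G : Type*) [Group G] [Nontrivial G]
    (Gs : ℕ → Subgroup G)
    (hnorm : ∀ i, (Gs i).Normal)
    (hfi : ∀ i, (Gs i).FiniteIndex)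
    (hdec : ∀ i, Gs (i + 1) ≤ Gs i)
    (hinter : (⨅ i, Gs i) = ⊥)
    (hiso : ∀ i, Nonempty (↥(Gs i) ≃* G))
    -- the rational Betti numbers of subgroups, invariant under group isomorphism
    (b : Subgroup G → ℕ → ℕ)
    (hinv : ∀ H K : Subgroup G, Nonempty (↥H ≃* ↥K) → ∀ q, b H q = b K q)
    -- Lück's approximation theorem for the `L²`-Betti numbers `b2`
    (b2 : ℕ → ℝ)
    (hLuck : ∀ q, Tendsto (fun i => (b (Gs i) q : ℝ) / (Gs i).index)
      atTop (nhds (b2 q))) :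
    ∀ q, b2 q = 0 := by
  -- the tower is antitone
  have hanti : Antitone Gs := antitone_nat_of_succ_le hdec
  -- indices are monotone
  set f : ℕ → ℕ := fun i => (Gs i).index with hf
  have hmono : Monotone f := by
    intro i j hij
    have hle : Gs j ≤ Gs i := hanti hij
    have hdvd : (Gs i).index ∣ (Gs j).index := Subgroup.index_dvd_of_le hle
    exact Nat.le_of_dvd (Nat.pos_of_ne_zero (hfi j).index_ne_zero) hdvd
  -- no Gs i is trivial
  have hne_bot : ∀ i, Gs i ≠ ⊥ := by
    intro i hbot
    obtain ⟨e⟩ := hiso i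
    obtain ⟨x, y, hxy⟩ := exists_pair_ne G
    apply hxy
    have : Subsingleton ↥(Gs i) := by rw [hbot]; infer_instance
    have := Subsingleton.elim (e.symm x) (e.symm y)
    simpa using congrArg e this
  -- the indices are unbounded
  have hunbdd : ∀ N : ℕ, ∃ i, N ≤ f i := by
    by_contra h
    push_neg at h
    obtain ⟨N, hN⟩ := h
    -- the set of values of f is bounded, so it attains a max
    have hbdd : BddAbove (Set.range f) := ⟨N, by rintro _ ⟨i, rfl⟩; exact (hN i).le⟩
    have hmem : sSup (Set.range f) ∈ Set.range f :=
      Nat.sSup_mem ⟨f 0, ⟨0, rfl⟩⟩ hbdd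
    obtain ⟨i, hi⟩ := hmem
    have hmax : ∀ j, f j ≤ f i := fun j => hi ▸ le_csSup hbdd ⟨j, rfl⟩
    -- the tower stabilizes at i
    have hstab : ∀ j, i ≤ j → Gs j = Gs i := by
      intro j hij
      have hle : Gs j ≤ Gs i := hanti hij
      have heq : f j = f i := le_antisymm (hmax j) (hmono hij)
      have hrel : (Gs j).relIndex (Gs i) * (Gs i).index = (Gs j).index :=
        Subgroup.relIndex_mul_index hle
      have h1 : (Gs j).relIndex (Gs i) = 1 := by
        have hne : (Gs i).index ≠ 0 := (hfi i).index_ne_zero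
        have : (Gs j).relIndex (Gs i) * (Gs i).index = 1 * (Gs i).index := by
          rw [hrel, one_mul]; exact heq
        exact Nat.eq_of_mul_eq_mul_right (Nat.pos_of_ne_zero hne) this
      exact le_antisymm hle (Subgroup.relIndex_eq_one.mp h1)
    -- hence the infimum is Gs i, contradicting triviality
    have hinf : (⨅ k, Gs k) = Gs i := by
      refine le_antisymm (iInf_le _ i) (le_iInf fun k => ?_)
      rcases le_total i k with h | h
      · exact (hstab k h).ge
      · exact hanti h
    exact hne_bot i (hinf ▸ hinter)
  have htop : Tendsto (fun i => (f i : ℝ)) atTop atTop :=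
    tendsto_natCast_atTop_atTop.comp (tendsto_atTop_atTop_of_monotone hmono hunbdd)
  intro q
  -- the Betti numbers are constant along the tower
  have hconst : ∀ i, b (Gs i) q = b ⊤ q := by
    intro i
    refine hinv (Gs i) ⊤ ⟨(hiso i).some.trans Subgroup.topEquiv.symm⟩ q
  -- compute the limit
  have h0 : Tendsto (fun i => (b (Gs i) q : ℝ) / (Gs i).index) atTop (nhds 0) := by
    have : Tendsto (fun i => (b ⊤ q : ℝ) / f i) atTop (nhds 0) :=
      Tendsto.div_atTop tendsto_const_nhds htop
    refine this.congr fun i => by rw [hconst i]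
  exact tendsto_nhds_unique (hLuck q) h0
end
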